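/- Let X be a finite-dimensional real inner product space, g : X → ℝ a convex function with min_{x∈X} g(x) < 0, C := {x : g(x) ≤ 0}, and x̄ ∈ X with x̄ ∉ C. Let d̄ := d(x̄, C). Suppose sequences {x_k}_{k≥0} ⊆ X, closed halfspaces {H_k}_{k≥0}, and {s_k}_{k≥0} ⊆ X satisfy, for all k ≥ 0: C ⊆ H_k; x_k is the metric projection of x̄ onto H_k; g(x_k) > 0; s_k ∈ ∂g(x_k); x_{k+1} is the metric projection of x̄ onto H_k ∩ C̃_k, where C̃_k := {x : g(x_k) + ⟨x − x_k, s_k⟩ ≤ 0}; and H_{k+1} := {x : ⟨x̄ − x_{k+1}, x − x_{k+1}⟩ ≤ 0}. Then, setting d_k := ‖x̄ − x_k‖ and v_k := d̄² − d_k², the sequence {v_k} is nonnegative and converges to zero at an O(1/k) rate; that is, there exists M > 0 such that 0 ≤ v_k ≤ M/k for all k ≥ 1. -/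

import Mathlib

/-!
Each iterate `x (k + 1)` lies in the halfspace `H k` onto which `x k` projects `x̄`, so the
variational inequality of the projection gives `‖x (k + 1) - x k‖² ≤ v k - v (k + 1)`. Conversely
`v k` is controlled by the distance from `x k` to `C`, which the Slater point `x₀` bounds by a
multiple of `g (x k)`; the cut `C̃ k` bounds `g (x k)` by `‖s k‖ ‖x (k + 1) - x k‖`, and the
subgradients are bounded because the iterates stay in a ball. Hence `v k ^ 2 ≤ c (v k - v (k + 1))`,
a recursion which forces `k v k ≤ c`.
-/

open RealInnerProductSpace Metric

theorem nat_mul_le_of_sq_le_mul_sub {v : ℕ → ℝ} {c : ℝ} (hc : 0 < c) (hv : ∀ k, 0 ≤ v k)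
    (hrec : ∀ k, v k ^ 2 ≤ c * (v k - v (k + 1))) {k : ℕ} (hk : 1 ≤ k) : k * v k ≤ c := by
  induction k, hk using Nat.le_induction with
  | base =>
    rw [Nat.cast_one, one_mul]
    nlinarith [hrec 1, hv 1, hv 2]
  | succ n hn ih =>
    have hn1 : (1 : ℝ) ≤ n := by exact_mod_cast hn
    have hvn : v n ≤ c := by nlinarith [hv n]
    -- `(n + 1) (c v - v²) = c² - (c - n v) (c - v) - v²` with `v = v n`
    have : c * ((n + 1) * v (n + 1)) ≤ c * c := by
      nlinarith [hrec n, mul_nonneg (sub_nonneg.2 ih) (sub_nonneg.2 hvn), sq_nonneg (v n)]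
    push_cast
    exact le_of_mul_le_mul_left this hc

section Metric

variable {X : Type*} [PseudoMetricSpace X]

theorem dist_le_infDist_of_subset {C K : Set X} (hC : C.Nonempty) (hCK : C ⊆ K) {z w : X}
    (hmin : ∀ y ∈ K, dist z w ≤ dist z y) : dist z w ≤ infDist z C :=
  (le_infDist hC).2 fun y hy => hmin y (hCK hy)

theorem sq_infDist_sub_sq_dist_le {C : Set X} {z w : X} (hw : dist z w ≤ infDist z C) :
    infDist z C ^ 2 - dist z w ^ 2 ≤ 2 * infDist z C * infDist w C := by
  have htri := infDist_le_infDist_add_dist (x := z) (y := w) (s := C)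
  nlinarith [dist_nonneg (x := z) (y := w), sq_nonneg (infDist z C - dist z w)]

end Metric

section InnerProductSpace

variable {X : Type*} [NormedAddCommGroup X] [InnerProductSpace ℝ X]

theorem convex_setOf_inner_le (a : X) (b : ℝ) : Convex ℝ {y : X | ⟪a, y⟫ ≤ b} :=
  convex_halfSpace_le (innerₛₗ ℝ a).isLinear b

theorem sq_norm_sub_le_of_forall_norm_sub_le {K : Set X} (hK : Convex ℝ K) {z w y : X}
    (hw : w ∈ K) (hmin : ∀ y ∈ K, ‖z - w‖ ≤ ‖z - y‖) (hy : y ∈ K) :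
    ‖y - w‖ ^ 2 ≤ ‖z - y‖ ^ 2 - ‖z - w‖ ^ 2 := by
  have : Nonempty K := ⟨⟨w, hw⟩⟩
  have hinf : ‖z - w‖ = ⨅ y : K, ‖z - y‖ :=
    le_antisymm (le_ciInf fun y => hmin y y.2)
      (ciInf_le (f := fun y : K => ‖z - y‖) ⟨0, Set.forall_mem_range.2 fun _ => norm_nonneg _⟩
        ⟨w, hw⟩)
  have hinner := (norm_eq_iInf_iff_real_inner_le_zero hK hw).1 hinf y hy
  have hexpand := norm_sub_sq_real (z - w) (y - w)
  rw [sub_sub_sub_cancel_right] at hexpand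
  linarith

theorem le_norm_mul_of_add_inner_le_zero {a L : ℝ} {u s : X} (h : a + ⟪u, s⟫ ≤ 0)
    (hs : ‖s‖ ≤ L) : a ≤ ‖u‖ * L := by
  have := neg_le_of_abs_le (abs_real_inner_le_norm u s)
  nlinarith [norm_nonneg u]

theorem norm_le_sub_of_forall_le_on_closedBall {g : X → ℝ} {p s : X} {L : ℝ}
    (hs : ∀ y, g p + ⟪s, y - p⟫ ≤ g y) (hL : ∀ y ∈ closedBall p 1, g y ≤ L) :
    ‖s‖ ≤ L - g p := by
  rcases eq_or_ne s 0 with rfl | hs0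
  · simpa using hL p (mem_closedBall_self zero_le_one)
  · have hball : p + ‖s‖⁻¹ • s ∈ closedBall p 1 := by
      simp [norm_smul, hs0]
    have hdir := hs (p + ‖s‖⁻¹ • s)
    rw [add_sub_cancel_left, real_inner_smul_right, real_inner_self_eq_norm_sq,
      sq, inv_mul_cancel_left₀ (norm_ne_zero_iff.2 hs0)] at hdir
    linarith [hL _ hball]

theorem exists_forall_norm_subgradient_le [ProperSpace X] {g : X → ℝ} (hg : Continuous g)
    (z : X) (r : ℝ) : ∃ L, ∀ p ∈ closedBall z r, ∀ s : X,
      (∀ y, g p + ⟪s, y - p⟫ ≤ g y) → ‖s‖ ≤ L - g p := by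
  obtain ⟨L, hL⟩ := (isCompact_closedBall z (r + 1)).bddAbove_image hg.continuousOn
  refine ⟨L, fun p hp s hs => norm_le_sub_of_forall_le_on_closedBall hs fun y hy => ?_⟩
  refine hL ⟨y, closedBall_subset_closedBall' ?_ hy, rfl⟩
  rw [mem_closedBall] at hp
  linarith

theorem ConvexOn.infDist_setOf_nonpos_le {g : X → ℝ} (hg : ConvexOn ℝ Set.univ g) {x₀ p : X}
    (hx₀ : g x₀ < 0) (hp : 0 ≤ g p) :
    infDist p {y | g y ≤ 0} ≤ g p * ‖x₀ - p‖ / -g x₀ := by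
  have hden : 0 < g p - g x₀ := by linarith
  set t := g p / (g p - g x₀)
  have ht0 : 0 ≤ t := div_nonneg hp hden.le
  have ht1 : 0 ≤ 1 - t := sub_nonneg.2 (div_le_one_of_le₀ (by linarith) hden.le)
  have hzero : g ((1 - t) • p + t • x₀) ≤ 0 :=
    calc g ((1 - t) • p + t • x₀) ≤ (1 - t) * g p + t * g x₀ :=
          hg.2 trivial trivial ht1 ht0 (by ring)
      _ = g p - t * (g p - g x₀) := by ring
      _ = 0 := by rw [div_mul_cancel₀ _ hden.ne', sub_self]
  calc infDist p {y | g y ≤ 0} ≤ dist p ((1 - t) • p + t • x₀) := infDist_le_dist_of_mem hzero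
    _ = t * ‖x₀ - p‖ := by
        rw [dist_eq_norm, show p - ((1 - t) • p + t • x₀) = t • (p - x₀) by module, norm_smul,
          Real.norm_of_nonneg ht0, norm_sub_rev]
    _ ≤ g p / -g x₀ * ‖x₀ - p‖ := by
        gcongr
        exact div_le_div_of_nonneg_left hp (by linarith) (by linarith)
    _ = g p * ‖x₀ - p‖ / -g x₀ := by ring

theorem ConvexOn.sq_infDist_sub_sq_norm_sub_le {g : X → ℝ} (hg : ConvexOn ℝ Set.univ g)
    {x₀ z p : X} (hx₀ : g x₀ < 0) (hp : 0 ≤ g p) (hzp : ‖z - p‖ ≤ infDist z {y | g y ≤ 0}) :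
    infDist z {y | g y ≤ 0} ^ 2 - ‖z - p‖ ^ 2 ≤
      2 * infDist z {y | g y ≤ 0} * (g p * (‖x₀ - z‖ + infDist z {y | g y ≤ 0}) / -g x₀) := by
  have hx₀p : ‖x₀ - p‖ ≤ ‖x₀ - z‖ + infDist z {y | g y ≤ 0} :=
    (norm_sub_le_norm_sub_add_norm_sub _ _ _).trans (by gcongr)
  rw [← dist_eq_norm] at hzp ⊢
  grw [sq_infDist_sub_sq_dist_le hzp, hg.infDist_setOf_nonpos_le hx₀ hp, hx₀p]
  · linarith
  all_goals exact mul_nonneg zero_le_two infDist_nonneg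

end InnerProductSpace

theorem dykstra_level_set_one_over_k_rate_general
    {X : Type*} [NormedAddCommGroup X] [InnerProductSpace ℝ X] [FiniteDimensional ℝ X]
    (g : X → ℝ) (hg : ConvexOn ℝ Set.univ g)
    (hmin : ∃ x₀ : X, g x₀ < 0 ∧ ∀ x, g x₀ ≤ g x)
    (C : Set X) (hC : C = {x : X | g x ≤ 0})
    (xbar : X) (hxbarC : xbar ∉ C)
    (dbar : ℝ) (hdbar : dbar = Metric.infDist xbar C)
    (x : ℕ → X) (H : ℕ → Set X) (s : ℕ → X)
    (hHhalf : ∀ k : ℕ, ∃ (a : X) (b : ℝ), a ≠ 0 ∧ H k = {y : X | ⟪a, y⟫ ≤ b})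
    (hCH : ∀ k : ℕ, C ⊆ H k)
    (hxk : ∀ k : ℕ, x k ∈ H k)
    (hxkproj : ∀ k : ℕ, ∀ y ∈ H k, ‖xbar - x k‖ ≤ ‖xbar - y‖)
    (hgpos : ∀ k : ℕ, 0 < g (x k))
    (hs : ∀ k : ℕ, ∀ y : X, g (x k) + ⟪s k, y - x k⟫ ≤ g y)
    (hxk1 : ∀ k : ℕ,
      x (k + 1) ∈ H k ∩ {y : X | g (x k) + ⟪y - x k, s k⟫ ≤ 0})
    (v : ℕ → ℝ) (hv : ∀ k : ℕ, v k = dbar ^ 2 - ‖xbar - x k‖ ^ 2) :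
    ∃ M > (0 : ℝ), ∀ k ≥ 1, 0 ≤ v k ∧ v k ≤ M / (k : ℝ) := by
  subst hC
  obtain ⟨x₀, hx₀, -⟩ := hmin
  have hgx₀ : 0 < -g x₀ := neg_pos.2 hx₀
  have hgcont : Continuous g := continuousOn_univ.1 (hg.continuousOn isOpen_univ)
  have hdbar_pos : 0 < dbar := hdbar ▸
    ((isClosed_le hgcont continuous_const).notMem_iff_infDist_pos ⟨x₀, hx₀.le⟩).1 hxbarC
  have hdk : ∀ k, ‖xbar - x k‖ ≤ dbar := fun k => by
    simpa only [hdbar, dist_eq_norm] using dist_le_infDist_of_subset ⟨x₀, hx₀.le⟩ (hCH k)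
      (by simpa only [dist_eq_norm] using hxkproj k)
  obtain ⟨L, hsubgrad⟩ := exists_forall_norm_subgradient_le hgcont xbar dbar
  have hsk : ∀ k, ‖s k‖ < L := fun k => by
    have := hsubgrad (x k) (by rw [mem_closedBall, dist_eq_norm']; exact hdk k) (s k) (hs k)
    linarith [hgpos k]
  set c := 2 * dbar * (L * (‖x₀ - xbar‖ + dbar) / -g x₀)
  have hL : 0 < L := (norm_nonneg _).trans_lt (hsk 0)
  have hv0 : ∀ k, 0 ≤ v k := fun k => by
    rw [hv, sub_nonneg]
    exact pow_le_pow_left₀ (norm_nonneg _) (hdk k) 2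
  have hdescent : ∀ k, ‖x (k + 1) - x k‖ ^ 2 ≤ v k - v (k + 1) := fun k => by
    obtain ⟨a, b, -, hHk⟩ := hHhalf k
    rw [hv, hv]
    linarith [sq_norm_sub_le_of_forall_norm_sub_le (hHk ▸ convex_setOf_inner_le a b) (hxk k)
      (hxkproj k) (hxk1 k).1]
  have hgap : ∀ k, v k ≤ c * ‖x (k + 1) - x k‖ := fun k =>
    calc v k ≤ 2 * dbar * (g (x k) * (‖x₀ - xbar‖ + dbar) / -g x₀) := by
          rw [hv, hdbar]
          exact hg.sq_infDist_sub_sq_norm_sub_le hx₀ (hgpos k).le (hdbar ▸ hdk k)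
      _ ≤ 2 * dbar * (‖x (k + 1) - x k‖ * L * (‖x₀ - xbar‖ + dbar) / -g x₀) := by
          gcongr
          exact le_norm_mul_of_add_inner_le_zero (hxk1 k).2 (hsk k).le
      _ = c * ‖x (k + 1) - x k‖ := by ring
  have hrec : ∀ k, v k ^ 2 ≤ c ^ 2 * (v k - v (k + 1)) := fun k =>
    calc v k ^ 2 ≤ (c * ‖x (k + 1) - x k‖) ^ 2 := pow_le_pow_left₀ (hv0 k) (hgap k) 2
      _ ≤ c ^ 2 * (v k - v (k + 1)) := by rw [mul_pow]; gcongr; exact hdescent k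
  refine ⟨c ^ 2, by positivity, fun k hk => ⟨hv0 k, ?_⟩⟩
  rw [le_div_iff₀ (by positivity), mul_comm]
  exact nat_mul_le_of_sq_le_mul_sub (by positivity) hv0 hrec hk

/-- For the Dykstra-type iteration with subgradient outer approximations,
the values `v_k = d̄² - d_k²` are nonnegative and converge to zero at an `O(1/k)` rate. -/
theorem dykstra_level_set_one_over_k_rate
    {X : Type*} [NormedAddCommGroup X] [InnerProductSpace ℝ X] [FiniteDimensional ℝ X]
    (g : X → ℝ) (hg : ConvexOn ℝ Set.univ g)
    (hmin : ∃ x₀ : X, g x₀ < 0 ∧ ∀ x, g x₀ ≤ g x)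
    (C : Set X) (hC : C = {x : X | g x ≤ 0})
    (xbar : X) (hxbarC : xbar ∉ C)
    (dbar : ℝ) (hdbar : dbar = Metric.infDist xbar C)
    (x : ℕ → X) (H : ℕ → Set X) (s : ℕ → X)
    (hHhalf : ∀ k : ℕ, ∃ (a : X) (b : ℝ), a ≠ 0 ∧ H k = {y : X | ⟪a, y⟫ ≤ b})
    (hCH : ∀ k : ℕ, C ⊆ H k)
    (hxk : ∀ k : ℕ, x k ∈ H k)
    (hxkproj : ∀ k : ℕ, ∀ y ∈ H k, ‖xbar - x k‖ ≤ ‖xbar - y‖)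
    (hgpos : ∀ k : ℕ, 0 < g (x k))
    (hs : ∀ k : ℕ, ∀ y : X, g (x k) + ⟪s k, y - x k⟫ ≤ g y)
    (hxk1 : ∀ k : ℕ,
      x (k + 1) ∈ H k ∩ {y : X | g (x k) + ⟪y - x k, s k⟫ ≤ 0})
    (hxk1proj : ∀ k : ℕ, ∀ y ∈ H k ∩ {y : X | g (x k) + ⟪y - x k, s k⟫ ≤ 0},
      ‖xbar - x (k + 1)‖ ≤ ‖xbar - y‖)
    (hHk1 : ∀ k : ℕ,
      H (k + 1) = {y : X | ⟪xbar - x (k + 1), y - x (k + 1)⟫ ≤ 0})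
    (v : ℕ → ℝ) (hv : ∀ k : ℕ, v k = dbar ^ 2 - ‖xbar - x k‖ ^ 2) :
    ∃ M > (0 : ℝ), ∀ k ≥ 1, 0 ≤ v k ∧ v k ≤ M / (k : ℝ) :=
  dykstra_level_set_one_over_k_rate_general g hg hmin C hC xbar hxbarC dbar hdbar x H s hHhalf hCH
    hxk hxkproj hgpos hs hxk1 v hv
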